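/- Let F ⊣ G and F' ⊣ G' be adjunctions between categories X and A, with conjugate natural transformations α: F ⟹ F' and β: G' ⟹ G, where A has pushouts and X has pullbacks. Let I be a class of maps in X and J a class of maps in A. If I ⋆ α ⊆ J, then (□(I^□)) ⋆ α ⊆ □(J^□). -/

import Mathlib

/-!
A conjugate pair `α : F ⟶ F'`, `β : G' ⟶ G` is exactly a parametrized adjunction between the
bifunctors `Fin 2 ⥤ X ⥤ A` and `(Fin 2)ᵒᵖ ⥤ A ⥤ X` that `α` and `β` define on the walking arrow
`0 ⟶ 1`. For it, `f ⋆ α` is the Leibniz pushout of `0 ⟶ 1` and `f`, and the Leibniz pullback of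
`0 ⟶ 1` and `g` is the gap map `g ⋄ β : G' a ⟶ G a ×_{G b} G' b`, so by transposition of squares and
lifts `(f ⋆ α) ⧄ g ↔ f ⧄ (g ⋄ β)`. Hence every `g ∈ J^□` has `g ⋄ β ∈ I^□`, against which every
`f ∈ □(I^□)` lifts.
-/

universe v u₁ u₂

open CategoryTheory Limits

namespace Paper

variable {X : Type u₁} [Category.{v} X] {A : Type u₂} [Category.{v} A]

/-- The class of maps with the right lifting property against all maps in `H`. -/
def Rlp {K : Type*} [Category K] (H : MorphismProperty K) : MorphismProperty K :=
  fun _ _ g => ∀ ⦃P Q : K⦄ (h : P ⟶ Q), H h → HasLiftingProperty h g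

/-- The class of maps with the left lifting property against all maps in `H`. -/
def Llp {K : Type*} [Category K] (H : MorphismProperty K) : MorphismProperty K :=
  fun _ _ f => ∀ ⦃P Q : K⦄ (h : P ⟶ Q), H h → HasLiftingProperty f h

/-- `f ⋆ α`: the induced map from the pushout of `F f` along `α_X` to `F' Y`. -/
noncomputable def starMap [HasPushouts A] {F F' : X ⥤ A} (α : F ⟶ F')
    {x y : X} (f : x ⟶ y) : pushout (F.map f) (α.app x) ⟶ F'.obj y :=
  pushout.desc (α.app y) (F'.map f) (α.naturality f)

/-- `α : F ⟶ F'` and `β : G' ⟶ G` are conjugate with respect to the adjunctions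
`F ⊣ G` and `F' ⊣ G'`. -/
def Conjugate {F F' : X ⥤ A} {G G' : A ⥤ X} (adj : F ⊣ G) (adj' : F' ⊣ G')
    (α : F ⟶ F') (β : G' ⟶ G) : Prop :=
  ∀ (x : X) (a : A) (u : F'.obj x ⟶ a),
    (adj.homEquiv x a) (α.app x ≫ u) = (adj'.homEquiv x a) u ≫ β.app a

section

variable {F F' : X ⥤ A} {G G' : A ⥤ X}

noncomputable def Conjugate.parametrizedAdjunction {adj : F ⊣ G} {adj' : F' ⊣ G'}
    {α : F ⟶ F'} {β : G' ⟶ G} (hconj : Conjugate adj adj' α β) :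
    ComposableArrows.mk₁ α ⊣₂ (ComposableArrows.mk₁ β.op).leftOp :=
  .mk' (fun | 0 => adj | 1 => adj') <| by
    intro i j f x a u
    obtain rfl | hij := (leOfHom f).eq_or_lt
    · obtain rfl : f = 𝟙 i := Subsingleton.elim _ _
      simp only [CategoryTheory.Functor.map_id, op_id, NatTrans.id_app, Category.id_comp,
        Category.comp_id]
    · obtain ⟨rfl, rfl⟩ : i = 0 ∧ j = 1 := by clear u f; revert i j; decide
      exact hconj x a u

noncomputable def starMapPushoutObjObj [HasPushouts A] (α : F ⟶ F') {x y : X} (f : x ⟶ y) :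
    (ComposableArrows.mk₁ α).PushoutObjObj (homOfLE zero_le_one : (0 : Fin 2) ⟶ 1) f where
  pt := pushout (F.map f) (α.app x)
  inl := pushout.inr _ _
  inr := pushout.inl _ _
  isPushout := (IsPushout.of_hasPushout _ _).flip
  ι := starMap α f
  inl_ι := pushout.inr_desc _ _ _
  inr_ι := pushout.inl_desc _ _ _

noncomputable def leibnizPullback [HasPullbacks X] (β : G' ⟶ G) {a b : A} (g : a ⟶ b) :
    G'.obj a ⟶ pullback (G.map g) (β.app b) :=
  (Functor.PullbackObjObj.ofHasPullback (ComposableArrows.mk₁ β.op).leftOp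
    (homOfLE zero_le_one : (0 : Fin 2) ⟶ 1) g).π

theorem Conjugate.hasLiftingProperty_starMap_iff [HasPushouts A] [HasPullbacks X]
    {adj : F ⊣ G} {adj' : F' ⊣ G'} {α : F ⟶ F'} {β : G' ⟶ G}
    (hconj : Conjugate adj adj' α β) {x y : X} (f : x ⟶ y) {a b : A} (g : a ⟶ b) :
    HasLiftingProperty (starMap α f) g ↔ HasLiftingProperty f (leibnizPullback β g) :=
  hconj.parametrizedAdjunction.hasLiftingProperty_iff (starMapPushoutObjObj α f) _

end

/-- for conjugate natural transformations `α : F ⟶ F'`, `β : G' ⟶ G`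
between adjunctions, if `I ⋆ α ⊆ J`, then `(□(I^□)) ⋆ α ⊆ □(J^□)`. -/
theorem statement10 [HasPushouts A] [HasPullbacks X]
    {F F' : X ⥤ A} {G G' : A ⥤ X} (adj : F ⊣ G) (adj' : F' ⊣ G')
    (α : F ⟶ F') (β : G' ⟶ G) (hconj : Conjugate adj adj' α β)
    (I : MorphismProperty X) (J : MorphismProperty A)
    (hIJ : ∀ ⦃x y : X⦄ (f : x ⟶ y), I f → J (starMap α f)) :
    ∀ ⦃x y : X⦄ (f : x ⟶ y), Llp (Rlp I) f → Llp (Rlp J) (starMap α f) := by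
  intro x y f hf a b g hg
  have hg' : Rlp I (leibnizPullback β g) := fun _ _ i hi =>
    (hconj.hasLiftingProperty_starMap_iff i g).mp (hg _ (hIJ i hi))
  exact (hconj.hasLiftingProperty_starMap_iff f g).mpr (hf _ hg')

end Paper
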